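/- Let m, n ∈ ℕ with m ≥ 3 and m+2 ≤ n ≤ 2m-1. Then every 2-coloring of the edges of K_{2n+m+1} contains a monochromatic copy of the bistar B(m,n); hence r(B(m,n)) ≤ 2n+m+1. -/
import Mathlib


open SimpleGraph

/-- The graph of edges of color `b` in the 2-coloring `c` of a complete graph. -/
def colorGraph {V : Type*} (c : Sym2 V → Bool) (b : Bool) : SimpleGraph V :=
  SimpleGraph.fromRel (fun u v => c s(u, v) = b)

/-- `G` occurs as a (not nec. induced) subgraph of `H`. -/
def ContainsCopy {V W : Type*} (G : SimpleGraph V) (H : SimpleGraph W) : Prop :=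
  ∃ f : V → W, Function.Injective f ∧ ∀ ⦃u v : V⦄, G.Adj u v → H.Adj (f u) (f v)

/-- The coloring `c` contains a monochromatic copy of `G`. -/
def HasMonoCopy {V W : Type*} (G : SimpleGraph V) (c : Sym2 W → Bool) : Prop :=
  ∃ b : Bool, ContainsCopy G (colorGraph c b)

/-- The (diagonal) Ramsey number of a graph `G`. -/
noncomputable def ramseyNumber {V : Type*} (G : SimpleGraph V) : ℕ :=
  sInf {r : ℕ | ∀ c : Sym2 (Fin r) → Bool, HasMonoCopy G c}

/-- The star `S n = K_{1,n}`: center `0`, `n` leaves. -/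
def starGraph (n : ℕ) : SimpleGraph (Fin (n + 1)) :=
  SimpleGraph.fromRel (fun u v => u = 0)

/-- The bistar `B(m,n)`: adjacent centers `inl 0`, `inl 1`, with `m` resp. `n` leaves. -/
def bistar (m n : ℕ) : SimpleGraph (Fin 2 ⊕ Fin m ⊕ Fin n) :=
  SimpleGraph.fromRel (fun u v =>
    (u = Sum.inl 0 ∧ v = Sum.inl 1) ∨
    (u = Sum.inl 0 ∧ ∃ i, v = Sum.inr (Sum.inl i)) ∨
    (u = Sum.inl 1 ∧ ∃ j, v = Sum.inr (Sum.inr j)))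

section Aux
variable {V : Type*} [Fintype V] [DecidableEq V]

def nbhd (c : Sym2 V → Bool) (b : Bool) (v : V) : Finset V :=
  Finset.univ.filter (fun w => w ≠ v ∧ c s(v, w) = b)

lemma mem_nbhd {c : Sym2 V → Bool} {b : Bool} {v w : V} :
    w ∈ nbhd c b v ↔ w ≠ v ∧ c s(v, w) = b := by
  simp [nbhd]

lemma nbhd_comm {c : Sym2 V → Bool} {b : Bool} {v w : V} :
    w ∈ nbhd c b v ↔ v ∈ nbhd c b w := by
  rw [mem_nbhd, mem_nbhd, Sym2.eq_swap, ne_comm]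

lemma notMem_nbhd_self {c : Sym2 V → Bool} {b : Bool} {v : V} : v ∉ nbhd c b v := by
  simp [mem_nbhd]

lemma colorGraph_adj {c : Sym2 V → Bool} {b : Bool} {u v : V} :
    (colorGraph c b).Adj u v ↔ u ≠ v ∧ c s(u, v) = b := by
  rw [colorGraph, SimpleGraph.fromRel_adj, Sym2.eq_swap (a := v), or_self]

lemma nbhd_card_add (c : Sym2 V → Bool) (b : Bool) (v : V) :
    (nbhd c b v).card + (nbhd c (!b) v).card = Fintype.card V - 1 := by
  have hdisj : Disjoint (nbhd c b v) (nbhd c (!b) v) := by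
    rw [Finset.disjoint_left]
    intro w h1 h2
    rw [mem_nbhd] at h1 h2
    cases b <;> simp_all
  have hunion : nbhd c b v ∪ nbhd c (!b) v = Finset.univ.erase v := by
    ext w
    by_cases hw : w = v
    · simp [hw, mem_nbhd, notMem_nbhd_self]
    · simp only [Finset.mem_union, mem_nbhd, Finset.mem_erase, Finset.mem_univ, and_true, hw,
        ne_eq, not_false_iff, true_and]
      cases b <;> cases hcc : c s(v, w) <;> simp
  rw [← Finset.card_union_of_disjoint hdisj, hunion,
    Finset.card_erase_of_mem (Finset.mem_univ v), Finset.card_univ]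

lemma union_inter_card (c : Sym2 V → Bool) {b : Bool} {x y : V} (hxy : x ≠ y)
    (hxyc : c s(x, y) = b) :
    (nbhd c b x ∪ nbhd c b y).card + (nbhd c (!b) x ∩ nbhd c (!b) y).card = Fintype.card V := by
  have hdisj : Disjoint (nbhd c b x ∪ nbhd c b y) (nbhd c (!b) x ∩ nbhd c (!b) y) := by
    rw [Finset.disjoint_left]
    intro z hz1 hz2
    rw [Finset.mem_inter, mem_nbhd, mem_nbhd] at hz2
    rw [Finset.mem_union, mem_nbhd, mem_nbhd] at hz1
    cases b <;> simp_all
  have hcover : (nbhd c b x ∪ nbhd c b y) ∪ (nbhd c (!b) x ∩ nbhd c (!b) y) = Finset.univ := by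
    ext z
    simp only [Finset.mem_union, Finset.mem_inter, mem_nbhd, Finset.mem_univ, iff_true]
    by_cases hzx : z = x
    · subst hzx
      left; right
      exact ⟨hxy, by rwa [Sym2.eq_swap]⟩
    · by_cases hzy : z = y
      · subst hzy
        left; left
        exact ⟨fun h => hxy h.symm, hxyc⟩
      · cases b <;> cases h1 : c s(x, z) <;> cases h2 : c s(y, z) <;> simp_all
  rw [← Finset.card_union_of_disjoint hdisj, hcover, Finset.card_univ]

lemma inter_split (c : Sym2 V → Bool) (b : Bool) {u : V} {W : Finset V} (hu : u ∉ W) :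
    (nbhd c b u ∩ W).card + (nbhd c (!b) u ∩ W).card = W.card := by
  have hdisj : Disjoint (nbhd c b u ∩ W) (nbhd c (!b) u ∩ W) := by
    rw [Finset.disjoint_left]
    intro z hz1 hz2
    rw [Finset.mem_inter, mem_nbhd] at hz1 hz2
    cases b <;> simp_all
  have hcover : (nbhd c b u ∩ W) ∪ (nbhd c (!b) u ∩ W) = W := by
    ext z
    simp only [Finset.mem_union, Finset.mem_inter, mem_nbhd]
    constructor
    · rintro (⟨_, h⟩ | ⟨_, h⟩) <;> exact h
    · intro hz
      have hzu : z ≠ u := fun h => hu (h ▸ hz)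
      cases b <;> cases h1 : c s(u, z) <;> simp_all
  rw [← Finset.card_union_of_disjoint hdisj, hcover]

lemma sum_inter_comm (c : Sym2 V → Bool) (b : Bool) (P W : Finset V) :
    ∑ u ∈ P, (nbhd c b u ∩ W).card = ∑ w ∈ W, (nbhd c b w ∩ P).card := by
  have key : ∀ (u : V) (Q : Finset V),
      (nbhd c b u ∩ Q).card = ∑ w ∈ Q, if w ∈ nbhd c b u then 1 else 0 := by
    intro u Q
    rw [Finset.inter_comm, ← Finset.filter_mem_eq_inter, Finset.card_filter]
  calc ∑ u ∈ P, (nbhd c b u ∩ W).card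
      = ∑ u ∈ P, ∑ w ∈ W, if w ∈ nbhd c b u then 1 else 0 := by
        exact Finset.sum_congr rfl fun u _ => key u W
    _ = ∑ w ∈ W, ∑ u ∈ P, if w ∈ nbhd c b u then 1 else 0 := Finset.sum_comm
    _ = ∑ w ∈ W, ∑ u ∈ P, if u ∈ nbhd c b w then 1 else 0 := by
        refine Finset.sum_congr rfl fun w _ => Finset.sum_congr rfl fun u _ => ?_
        simp only [nbhd_comm (v := u) (w := w)]
    _ = ∑ w ∈ W, (nbhd c b w ∩ P).card := by
        exact Finset.sum_congr rfl fun w _ => (key w P).symm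


lemma choose_sets {m n : ℕ} {A B : Finset V} (hA : m ≤ A.card) (hB : n ≤ B.card)
    (hAB : m + n ≤ (A ∪ B).card) :
    ∃ S T : Finset V, S ⊆ A ∧ T ⊆ B ∧ Disjoint S T ∧ S.card = m ∧ T.card = n := by
  by_cases h : n ≤ (B \ A).card
  · obtain ⟨T, hT, hTc⟩ := Finset.exists_subset_card_eq h
    obtain ⟨S, hS, hSc⟩ := Finset.exists_subset_card_eq hA
    refine ⟨S, T, hS, hT.trans (Finset.sdiff_subset), ?_, hSc, hTc⟩
    exact (Finset.disjoint_sdiff.mono_right hT).mono_left hS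
  · push_neg at h
    have hBA : (B ∩ A).card = B.card - (B \ A).card := by
      have := Finset.card_inter_add_card_sdiff B A
      omega
    obtain ⟨U, hU, hUc⟩ := Finset.exists_subset_card_eq
      (show n - (B \ A).card ≤ (B ∩ A).card by omega)
    set T : Finset V := (B \ A) ∪ U with hTdef
    have hTB : T ⊆ B := Finset.union_subset Finset.sdiff_subset (hU.trans Finset.inter_subset_left)
    have hTc : T.card = n := by
      rw [hTdef, Finset.card_union_of_disjoint]
      · omega
      · exact Finset.disjoint_sdiff_inter B A |>.mono_right hU
    have hAU : m ≤ (A \ U).card := by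
      have h1 : (A \ U).card + U.card = (A ∪ U).card := Finset.card_sdiff_add_card A U
      have h1' : A.card ≤ (A ∪ U).card := Finset.card_le_card Finset.subset_union_left
      have h2 : (B \ A).card + A.card = (A ∪ B).card := by
        rw [Finset.union_comm]
        exact Finset.card_sdiff_add_card B A
      omega
    obtain ⟨S, hS, hSc⟩ := Finset.exists_subset_card_eq hAU
    refine ⟨S, T, hS.trans (Finset.sdiff_subset), hTB, ?_, hSc, hTc⟩
    rw [Finset.disjoint_union_right]
    constructor
    · exact Finset.disjoint_sdiff.mono_left (hS.trans Finset.sdiff_subset)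
    · exact Finset.sdiff_disjoint.mono_left hS

lemma embed_sets {m n : ℕ} {c : Sym2 V → Bool} {b : Bool} {x y : V}
    (hxy : x ≠ y) (hxyc : c s(x, y) = b) {S T : Finset V}
    (hSx : S ⊆ nbhd c b x) (hTy : T ⊆ nbhd c b y)
    (hST : Disjoint S T) (hyS : y ∉ S) (hxT : x ∉ T)
    (hScard : S.card = m) (hTcard : T.card = n) :
    ContainsCopy (bistar m n) (colorGraph c b) := by
  classical
  set eS : Fin m → V := fun i => (S.equivFin.symm (Fin.cast hScard.symm i) : V) with heS
  set eT : Fin n → V := fun j => (T.equivFin.symm (Fin.cast hTcard.symm j) : V) with heT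
  have heSm : ∀ i, eS i ∈ S := fun i => (S.equivFin.symm _).2
  have heTm : ∀ j, eT j ∈ T := fun j => (T.equivFin.symm _).2
  have heSinj : Function.Injective eS := by
    intro i j hij
    have h1 := S.equivFin.symm.injective (Subtype.ext hij)
    have h2 := congrArg Fin.val h1
    simpa [Fin.ext_iff] using h2
  have heTinj : Function.Injective eT := by
    intro i j hij
    have h1 := T.equivFin.symm.injective (Subtype.ext hij)
    have h2 := congrArg Fin.val h1
    simpa [Fin.ext_iff] using h2
  have hxS : x ∉ S := fun h => (mem_nbhd.mp (hSx h)).1 rfl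
  have hyT : y ∉ T := fun h => (mem_nbhd.mp (hTy h)).1 rfl
  set f : Fin 2 ⊕ Fin m ⊕ Fin n → V :=
    Sum.elim (fun i => if i = 0 then x else y) (Sum.elim eS eT) with hf
  have hf0 : f (Sum.inl 0) = x := rfl
  have hf1 : f (Sum.inl 1) = y := rfl
  have hfS : ∀ i, f (Sum.inr (Sum.inl i)) = eS i := fun _ => rfl
  have hfT : ∀ j, f (Sum.inr (Sum.inr j)) = eT j := fun _ => rfl
  have hdisjST : ∀ i j, eS i ≠ eT j := by
    intro i j h
    exact Finset.disjoint_left.mp hST (heSm i) (h ▸ heTm j)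
  have hinl_ne_eS : ∀ (i : Fin 2) (j : Fin m), f (Sum.inl i) ≠ f (Sum.inr (Sum.inl j)) := by
    intro i j h
    have hmem : eS j ∈ S := heSm j
    have h' : f (Sum.inl i) = eS j := h
    by_cases h1 : i = 0
    · rw [h1, hf0] at h'
      rw [← h'] at hmem
      exact hxS hmem
    · have h2 : i = 1 := by omega
      rw [h2, hf1] at h'
      rw [← h'] at hmem
      exact hyS hmem
  have hinl_ne_eT : ∀ (i : Fin 2) (j : Fin n), f (Sum.inl i) ≠ f (Sum.inr (Sum.inr j)) := by
    intro i j h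
    have hmem : eT j ∈ T := heTm j
    have h' : f (Sum.inl i) = eT j := h
    by_cases h1 : i = 0
    · rw [h1, hf0] at h'
      rw [← h'] at hmem
      exact hxT hmem
    · have h2 : i = 1 := by omega
      rw [h2, hf1] at h'
      rw [← h'] at hmem
      exact hyT hmem
  refine ⟨f, ?_, ?_⟩
  · rintro (i | (j | k)) (i' | (j' | k')) hab
    · by_cases h1 : i = 0 <;> by_cases h2 : i' = 0
      · rw [h1, h2]
      · exfalso
        have h2' : i' = 1 := by omega
        rw [h1, h2'] at hab
        exact hxy (by rw [← hf0, ← hf1, hab])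
      · exfalso
        have h1' : i = 1 := by omega
        rw [h1', h2] at hab
        exact hxy (by rw [← hf0, ← hf1, hab])
      · have h1' : i = 1 := by omega
        have h2' : i' = 1 := by omega
        rw [h1', h2']
    · exact absurd hab (hinl_ne_eS i j')
    · exact absurd hab (hinl_ne_eT i k')
    · exact absurd hab.symm (hinl_ne_eS i' j)
    · exact congrArg (fun t => Sum.inr (Sum.inl t)) (heSinj hab)
    · exact absurd hab (hdisjST j k')
    · exact absurd hab.symm (hinl_ne_eT i' k)
    · exact absurd hab.symm (hdisjST j' k)
    · exact congrArg (fun t => Sum.inr (Sum.inr t)) (heTinj hab)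
  · have hadjxy : (colorGraph c b).Adj x y := colorGraph_adj.mpr ⟨hxy, hxyc⟩
    have hadjxS : ∀ i, (colorGraph c b).Adj x (eS i) := by
      intro i
      obtain ⟨h1, h2⟩ := mem_nbhd.mp (hSx (heSm i))
      exact colorGraph_adj.mpr ⟨fun h => h1 h.symm, h2⟩
    have hadjyT : ∀ j, (colorGraph c b).Adj y (eT j) := by
      intro j
      obtain ⟨h1, h2⟩ := mem_nbhd.mp (hTy (heTm j))
      exact colorGraph_adj.mpr ⟨fun h => h1 h.symm, h2⟩
    intro u v huv
    rw [bistar, SimpleGraph.fromRel_adj] at huv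
    obtain ⟨hne, hrel | hrel⟩ := huv
    · rcases hrel with ⟨hu, hv⟩ | ⟨hu, i, hv⟩ | ⟨hu, j, hv⟩ <;> subst hu <;> subst hv
      · exact hadjxy
      · exact hadjxS i
      · exact hadjyT j
    · rcases hrel with ⟨hv, hu⟩ | ⟨hv, i, hu⟩ | ⟨hv, j, hu⟩ <;> subst hu <;> subst hv
      · exact hadjxy.symm
      · exact (hadjxS i).symm
      · exact (hadjyT j).symm

lemma embed_union {m n : ℕ} {c : Sym2 V → Bool} {b : Bool} {x y : V}
    (hxy : x ≠ y) (hxyc : c s(x, y) = b)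
    (hx : m + 1 ≤ (nbhd c b x).card) (hy : n + 1 ≤ (nbhd c b y).card)
    (hu : m + n + 2 ≤ (nbhd c b x ∪ nbhd c b y).card) :
    ContainsCopy (bistar m n) (colorGraph c b) := by
  classical
  set A : Finset V := nbhd c b x \ {y} with hA
  set B : Finset V := nbhd c b y \ {x} with hB
  have hyx : y ∈ nbhd c b x := mem_nbhd.mpr ⟨hxy.symm, hxyc⟩
  have hxy' : x ∈ nbhd c b y := mem_nbhd.mpr ⟨hxy, by rwa [Sym2.eq_swap]⟩
  have hAcard : m ≤ A.card := by
    rw [hA, Finset.sdiff_singleton_eq_erase, Finset.card_erase_of_mem hyx]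
    omega
  have hBcard : n ≤ B.card := by
    rw [hB, Finset.sdiff_singleton_eq_erase, Finset.card_erase_of_mem hxy']
    omega
  have hABeq : A ∪ B = (nbhd c b x ∪ nbhd c b y) \ {x, y} := by
    rw [hA, hB]
    ext z
    simp only [Finset.mem_union, Finset.mem_sdiff, Finset.mem_singleton, Finset.mem_insert]
    constructor
    · rintro (⟨hz, hzy⟩ | ⟨hz, hzx⟩)
      · exact ⟨Or.inl hz, by push_neg; exact ⟨fun h => (mem_nbhd.mp hz).1 (by rw [h]), hzy⟩⟩
      · exact ⟨Or.inr hz, by push_neg; exact ⟨hzx, fun h => (mem_nbhd.mp hz).1 (by rw [h])⟩⟩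
    · rintro ⟨hz | hz, hne⟩
      · push_neg at hne
        exact Or.inl ⟨hz, hne.2⟩
      · push_neg at hne
        exact Or.inr ⟨hz, hne.1⟩
  have hABcard : m + n ≤ (A ∪ B).card := by
    rw [hABeq]
    have hsub : ({x, y} : Finset V) ⊆ nbhd c b x ∪ nbhd c b y := by
      intro z hz
      simp only [Finset.mem_insert, Finset.mem_singleton] at hz
      rcases hz with rfl | rfl
      · exact Finset.mem_union_right _ hxy'
      · exact Finset.mem_union_left _ hyx
    rw [Finset.card_sdiff_of_subset hsub, Finset.card_insert_of_notMem (by simpa using hxy),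
      Finset.card_singleton]
    omega
  obtain ⟨S, T, hSA, hTB, hST, hSc, hTc⟩ := choose_sets hAcard hBcard hABcard
  refine embed_sets hxy hxyc (hSA.trans ?_) (hTB.trans ?_) hST ?_ ?_ hSc hTc
  · rw [hA]; exact Finset.sdiff_subset
  · rw [hB]; exact Finset.sdiff_subset
  · intro h
    have := hSA h
    rw [hA, Finset.mem_sdiff, Finset.mem_singleton] at this
    exact this.2 rfl
  · intro h
    have := hTB h
    rw [hB, Finset.mem_sdiff, Finset.mem_singleton] at this
    exact this.2 rfl

end Aux

lemma main_core (m n : ℕ) (hm : 3 ≤ m) (hn₁ : m + 2 ≤ n)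
    (c : Sym2 (Fin (2 * n + m + 1)) → Bool) : HasMonoCopy (bistar m n) c := by
  by_contra hno
  have hnb : ∀ b, ¬ ContainsCopy (bistar m n) (colorGraph c b) := fun b hb => hno ⟨b, hb⟩
  have hsum : ∀ (b : Bool) (v : Fin (2 * n + m + 1)),
      (nbhd c b v).card + (nbhd c (!b) v).card = 2 * n + m := by
    intro b v
    have := nbhd_card_add c b v
    rw [Fintype.card_fin] at this
    omega
  have hembed : ∀ (b : Bool) (x y : Fin (2 * n + m + 1)), x ≠ y → c s(x, y) = b →
      m + 1 ≤ (nbhd c b x).card → n + 1 ≤ (nbhd c b y).card →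
      m + n + 2 ≤ (nbhd c b x ∪ nbhd c b y).card → False :=
    fun b x y h1 h2 h3 h4 h5 => hnb b (embed_union h1 h2 h3 h4 h5)
  -- Step A: no vertex has degree ≥ m+n+1 in any color
  have haux : ∀ (b : Bool) (w : Fin (2 * n + m + 1)), m + n + 1 ≤ (nbhd c b w).card →
      ∀ u ∈ nbhd c b w, (nbhd c b u).card ≤ m := by
    intro b w hw u hu
    by_contra h'
    push_neg at h'
    have huw : u ≠ w := (mem_nbhd.mp hu).1
    have hcuw : c s(u, w) = b := by rw [Sym2.eq_swap]; exact (mem_nbhd.mp hu).2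
    have hwmem : w ∈ nbhd c b u := nbhd_comm.mp hu
    have hsub : insert w (nbhd c b w) ⊆ nbhd c b u ∪ nbhd c b w := by
      intro z hz
      rw [Finset.mem_insert] at hz
      rcases hz with rfl | hz
      · exact Finset.mem_union_left _ hwmem
      · exact Finset.mem_union_right _ hz
    have hcard2 : m + n + 2 ≤ (nbhd c b u ∪ nbhd c b w).card := by
      have h1 := Finset.card_le_card hsub
      rw [Finset.card_insert_of_notMem notMem_nbhd_self] at h1
      omega
    exact hembed b u w huw hcuw h' (by omega) hcard2
  have hbig : ∀ (b : Bool) (v : Fin (2 * n + m + 1)), (nbhd c b v).card ≤ m + n := by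
    by_contra h'
    push_neg at h'
    obtain ⟨b, w, hw⟩ := h'
    set F : Bool → Finset (Fin (2 * n + m + 1)) :=
      fun b' => Finset.univ.filter (fun x => m + n + 1 ≤ (nbhd c b' x).card) with hF
    have step : ∀ (b' : Bool) (w' : Fin (2 * n + m + 1)), m + n + 1 ≤ (nbhd c b' w').card →
        m + n + 1 ≤ (F (!b')).card := by
      intro b' w' hw'
      have hsub : nbhd c b' w' ⊆ F (!b') := by
        intro u hu
        have h1 := haux b' w' hw' u hu
        have h2 := hsum b' u
        rw [hF]
        simp only [Finset.mem_filter, Finset.mem_univ, true_and]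
        omega
      calc m + n + 1 ≤ (nbhd c b' w').card := hw'
        _ ≤ (F (!b')).card := Finset.card_le_card hsub
    have h1 : m + n + 1 ≤ (F (!b)).card := step b w hw
    obtain ⟨u, hu⟩ := Finset.card_pos.mp (by omega : 0 < (F (!b)).card)
    rw [hF] at hu
    simp only [Finset.mem_filter, Finset.mem_univ, true_and] at hu
    have h2 : m + n + 1 ≤ (F (!(!b))).card := step (!b) u hu
    rw [Bool.not_not] at h2
    have hdisjF : Disjoint (F b) (F (!b)) := by
      rw [Finset.disjoint_left]
      intro z hz1 hz2
      rw [hF] at hz1 hz2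
      simp only [Finset.mem_filter, Finset.mem_univ, true_and] at hz1 hz2
      have := hsum b z
      omega
    have hle : (F b ∪ F (!b)).card ≤ 2 * n + m + 1 := by
      have := Finset.card_le_univ (F b ∪ F (!b))
      rwa [Fintype.card_fin] at this
    rw [Finset.card_union_of_disjoint hdisjF] at hle
    omega
  have hdeglb : ∀ (b : Bool) (v : Fin (2 * n + m + 1)), n ≤ (nbhd c b v).card := by
    intro b v
    have h1 := hsum b v
    have h2 := hbig (!b) v
    omega
  -- Step B : a vertex of degree ≥ n+2 in some color
  obtain ⟨b, v, hbv⟩ : ∃ (b : Bool) (v : Fin (2 * n + m + 1)), n + 2 ≤ (nbhd c b v).card := by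
    have h1 := hsum true ⟨0, by omega⟩
    rcases le_or_gt (n + 2) ((nbhd c true ⟨0, by omega⟩).card) with h | h
    · exact ⟨true, ⟨0, by omega⟩, h⟩
    · refine ⟨false, ⟨0, by omega⟩, ?_⟩
      simp only [Bool.not_true] at h1
      omega
  -- basic quantities
  have hPW := hsum b v
  have hPub := hbig b v
  have hWlb := hdeglb (!b) v
  -- Step C
  have hC : ∀ u ∈ nbhd c b v, n ≤ (nbhd c (!b) u ∩ nbhd c (!b) v).card := by
    intro u hu
    by_contra h'
    push_neg at h'
    have huv : u ≠ v := (mem_nbhd.mp hu).1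
    have hcuv : c s(u, v) = b := by rw [Sym2.eq_swap]; exact (mem_nbhd.mp hu).2
    have hui := union_inter_card c huv hcuv
    rw [Fintype.card_fin] at hui
    have hunion : m + n + 2 ≤ (nbhd c b u ∪ nbhd c b v).card := by omega
    exact hembed b u v huv hcuv (by have := hdeglb b u; omega) (by omega) hunion
  have hudisj : ∀ u ∈ nbhd c b v, u ∉ nbhd c (!b) v := by
    intro u hu hu'
    have h1 := (mem_nbhd.mp hu).2
    have h2 := (mem_nbhd.mp hu').2
    cases b <;> simp_all
  have hC' : ∀ u ∈ nbhd c b v, (nbhd c b u ∩ nbhd c (!b) v).card + n ≤ (nbhd c (!b) v).card := by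
    intro u hu
    have h1 := inter_split c b (hudisj u hu)
    have h2 := hC u hu
    omega
  -- Step D : find w in nbhd !b v with few common b-neighbours with v
  obtain ⟨w, hwW, hwsmall⟩ :
      ∃ w ∈ nbhd c (!b) v, (nbhd c b w ∩ nbhd c b v).card < n := by
    by_contra h'
    push_neg at h'
    have hge : (nbhd c (!b) v).card * n ≤ ∑ w ∈ nbhd c (!b) v, (nbhd c b w ∩ nbhd c b v).card := by
      calc (nbhd c (!b) v).card * n = ∑ _w ∈ nbhd c (!b) v, n := by
            rw [Finset.sum_const, smul_eq_mul]
        _ ≤ _ := Finset.sum_le_sum h'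
    rw [← sum_inter_comm] at hge
    have hle : ∑ u ∈ nbhd c b v, (nbhd c b u ∩ nbhd c (!b) v).card ≤
        (nbhd c b v).card * ((nbhd c (!b) v).card - n) := by
      have := Finset.sum_le_card_nsmul (nbhd c b v) (fun u => (nbhd c b u ∩ nbhd c (!b) v).card)
        ((nbhd c (!b) v).card - n) (fun u hu => by
          have := hC' u hu
          show (nbhd c b u ∩ nbhd c (!b) v).card ≤ (nbhd c (!b) v).card - n
          omega)
      simpa [smul_eq_mul] using this
    have hcomb : (nbhd c (!b) v).card * n ≤ (nbhd c b v).card * ((nbhd c (!b) v).card - n) :=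
      le_trans hge hle
    set t := (nbhd c (!b) v).card - n with ht
    have hWt : (nbhd c (!b) v).card = n + t := by omega
    have h1 : (n + t) * n ≤ (n + m) * t := by
      calc (n + t) * n = (nbhd c (!b) v).card * n := by rw [hWt]
        _ ≤ (nbhd c b v).card * t := hcomb
        _ ≤ (n + m) * t := Nat.mul_le_mul_right _ (by omega)
    have h2 : n * n + n * t ≤ n * t + m * t := by
      have e1 : (n + t) * n = n * n + n * t := by ring
      have e2 : (n + m) * t = n * t + m * t := by ring
      omega
    have h3 : n * n ≤ m * t := by omega
    have h4 : m * t ≤ n * t := Nat.mul_le_mul_right _ (by omega)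
    have h6 : n ≤ t := Nat.le_of_mul_le_mul_left (le_trans h3 h4) (by omega)
    omega
  -- Step E : build a monochromatic bistar in color !b with centres v and w
  have hwv : w ≠ v := (mem_nbhd.mp hwW).1
  have hcvw : c s(v, w) = !b := (mem_nbhd.mp hwW).2
  have huni2 := union_inter_card c (show v ≠ w from fun h => hwv h.symm) hcvw
  rw [Bool.not_not, Fintype.card_fin] at huni2
  have hcommon : (nbhd c b v ∩ nbhd c b w).card < n := by
    rw [Finset.inter_comm]
    exact hwsmall
  have hunion2 : m + n + 2 ≤ (nbhd c (!b) v ∪ nbhd c (!b) w).card := by omega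
  rcases eq_or_lt_of_le hWlb with hWeq | hWgt
  · -- W.card = n : every vertex of nbhd b v is a !b-neighbour of w
    have hPsub : nbhd c b v ⊆ nbhd c (!b) w := by
      intro u hu
      have h1 := hC u hu
      have h3 : nbhd c (!b) u ∩ nbhd c (!b) v = nbhd c (!b) v := by
        apply Finset.eq_of_subset_of_card_le Finset.inter_subset_right
        omega
      have h4 : w ∈ nbhd c (!b) u := by
        have h5 : w ∈ nbhd c (!b) u ∩ nbhd c (!b) v := by rw [h3]; exact hwW
        exact (Finset.mem_inter.mp h5).1
      exact nbhd_comm.mp h4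
    have hdegw : n + 1 ≤ (nbhd c (!b) w).card := by
      have := Finset.card_le_card hPsub
      omega
    exact hembed (!b) v w (fun h => hwv h.symm) hcvw (by omega) hdegw hunion2
  · -- W.card ≥ n+1 : v is the n-centre, w the m-centre
    refine hembed (!b) w v hwv (by rw [Sym2.eq_swap]; exact hcvw)
      (by have := hdeglb (!b) w; omega) (by omega) ?_
    rw [Finset.union_comm]
    exact hunion2

theorem bistar_ramsey_upper_big_n (m n : ℕ) (hm : 3 ≤ m)
    (hn₁ : m + 2 ≤ n) (hn₂ : n ≤ 2 * m - 1) :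
    (∀ c : Sym2 (Fin (2 * n + m + 1)) → Bool, HasMonoCopy (bistar m n) c) ∧
    ramseyNumber (bistar m n) ≤ 2 * n + m + 1 := by
  constructor
  · exact fun c => main_core m n hm hn₁ c
  · exact Nat.sInf_le (fun c => main_core m n hm hn₁ c)
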